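/- In a finite concurrent reachability game with value vector m, for every ε > 0 there exists a positional Player A strategy s_A such that val(s_A)(q) = m(q) for every q ∈ Sec(Bad), and val(s_A)(q) ≥ m(q) − ε for every q ∈ Bad. In particular, Sec(Bad) ⊆ MaxQ_A. -/

import Mathlib

open scoped BigOperators Classical

noncomputable section

/-- A probability distribution on a finite type. -/
def FDist (X : Type) [Fintype X] : Type :=
  { p : X → ℝ // (∀ x, 0 ≤ p x) ∧ ∑ x, p x = 1 }

namespace CRG

variable {A B Q D : Type} [Fintype A] [Fintype B] [Fintype Q] [Fintype D]

/-- The support of a distribution. -/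
def supp {X : Type} [Fintype X] (σ : FDist X) : Set X := { x | σ.1 x ≠ 0 }

/-- The Dirac distribution. -/
def dirac {X : Type} [Fintype X] [DecidableEq X] (x : X) : FDist X :=
  ⟨fun y => if y = x then 1 else 0, by
    constructor
    · intro y
      dsimp only
      split <;> norm_num
    · simp⟩

/-- Outcome of a pair of mixed strategies in the game in normal form with payoff `u`. -/
def out (u : A → B → ℝ) (σA : FDist A) (σB : FDist B) : ℝ :=
  ∑ a, ∑ b, σA.1 a * σB.1 b * u a b

/-- Outcome of a mixed strategy of Player A against a pure action of Player B. -/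
def outB (u : A → B → ℝ) (σA : FDist A) (b : B) : ℝ :=
  ∑ a, σA.1 a * u a b

/-- The value of a Player A mixed strategy in a game in normal form. -/
def valStratGF (u : A → B → ℝ) (σA : FDist A) : ℝ :=
  ⨅ σB : FDist B, out u σA σB

/-- The (von Neumann) value of a finite game in normal form. -/
def valGF (u : A → B → ℝ) : ℝ :=
  ⨆ σA : FDist A, valStratGF u σA

/-- The optimal Player A mixed strategies in a game in normal form. -/
def OptA (u : A → B → ℝ) : Set (FDist A) := { σA | valStratGF u σA = valGF u }

/-- The optimal actions of Player B against the Player A mixed strategy `σA`. -/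
def optActs (u : A → B → ℝ) (σA : FDist A) : Set B :=
  { b | outB u σA b = valStratGF u σA }

/-- μ_v : the lift of a valuation of the states to the Nature states. -/
def lift (dist : D → FDist Q) (v : Q → ℝ) (d : D) : ℝ := ∑ q, (dist d).1 q * v q

/-- The payoff function of the local interaction `F_q` valued by `μ_m`. -/
def locPay (δ : Q → A → B → D) (dist : D → FDist Q) (m : Q → ℝ) (q : Q) : A → B → ℝ :=
  fun a b => lift dist m (δ q a b)

/-- One-step transition probability between states. -/
def step (δ : Q → A → B → D) (dist : D → FDist Q) (σA : FDist A) (σB : FDist B)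
    (q q' : Q) : ℝ :=
  ∑ a, ∑ b, σA.1 a * σB.1 b * (dist (δ q a b)).1 q'

/-- The operator Δ on valuations of the states. -/
def Δop (δ : Q → A → B → D) (dist : D → FDist Q) (T : Q) (v : Q → ℝ) : Q → ℝ :=
  fun q => if q = T then 1 else valGF (fun a b => lift dist v (δ q a b))

/-- The target `T` is an absorbing (self-looping) sink. -/
def Absorbing (δ : Q → A → B → D) (dist : D → FDist Q) (T : Q) : Prop :=
  ∀ a b, (dist (δ T a b)).1 = fun q => if q = T then 1 else 0

/-- `m` is the least fixed point of Δ on `[0,1]^Q`. -/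
def IsLfpDelta (δ : Q → A → B → D) (dist : D → FDist Q) (T : Q) (m : Q → ℝ) : Prop :=
  (∀ q, m q ∈ Set.Icc (0:ℝ) 1) ∧ Δop δ dist T m = m ∧
    ∀ v : Q → ℝ, (∀ q, v q ∈ Set.Icc (0:ℝ) 1) → Δop δ dist T v = v → ∀ q, m q ≤ v q

/-- A strategy: a history of past states together with the current state gives a
mixed action.  (This encodes maps `Q⁺ → 𝒟(X)`.) -/
def Strat (Q X : Type) [Fintype X] : Type := List Q → Q → FDist X

/-- Residual strategy after the history `π` has been played. -/
def residual {X : Type} [Fintype X] (s : Strat Q X) (π : List Q) : Strat Q X :=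
  fun h q => s (π ++ h) q

/-- The (positional) strategy associated with a per-state choice of mixed actions. -/
def ofPos {X : Type} [Fintype X] (s : Q → FDist X) : Strat Q X := fun _ q => s q

/-- Probability of reaching the set `S` within `n` steps from current state `q`,
history `h` having been played. -/
def reachSetNAux (δ : Q → A → B → D) (dist : D → FDist Q) (S : Set Q) :
    ℕ → Strat Q A → Strat Q B → List Q → Q → ℝ
  | 0, _, _, _, q => if q ∈ S then 1 else 0
  | n + 1, sA, sB, h, q =>
      if q ∈ S then 1
      else ∑ q', step δ dist (sA h q) (sB h q) q q' *
        reachSetNAux δ dist S n sA sB (h ++ [q]) q'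

/-- Probability of reaching the set `S` within `n` steps from state `q`. -/
def reachSetN (δ : Q → A → B → D) (dist : D → FDist Q) (S : Set Q) (n : ℕ)
    (sA : Strat Q A) (sB : Strat Q B) (q : Q) : ℝ :=
  reachSetNAux δ dist S n sA sB [] q

/-- Probability of reaching the target `T` within `n` steps from state `q`. -/
def reachN (δ : Q → A → B → D) (dist : D → FDist Q) (T : Q) (n : ℕ)
    (sA : Strat Q A) (sB : Strat Q B) (q : Q) : ℝ :=
  reachSetN δ dist {T} n sA sB q

/-- Probability of eventually reaching the target `T` from state `q`. -/
def reach (δ : Q → A → B → D) (dist : D → FDist Q) (T : Q)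
    (sA : Strat Q A) (sB : Strat Q B) (q : Q) : ℝ :=
  ⨆ n : ℕ, reachN δ dist T n sA sB q

/-- The value of a Player A strategy from state `q`. -/
def valA (δ : Q → A → B → D) (dist : D → FDist Q) (T : Q) (sA : Strat Q A) (q : Q) : ℝ :=
  ⨅ sB : Strat Q B, reach δ dist T sA sB q

/-- The value of the game from state `q`. -/
def value (δ : Q → A → B → D) (dist : D → FDist Q) (T : Q) (q : Q) : ℝ :=
  ⨆ sA : Strat Q A, valA δ dist T sA q

/-- A state is maximizable when Player A has an optimal strategy from it. -/
def Maximizable (δ : Q → A → B → D) (dist : D → FDist Q) (T q : Q) : Prop :=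
  ∃ sA : Strat Q A, valA δ dist T sA q = value δ dist T q

/-- A positional Player A strategy locally dominates the valuation `v`. -/
def LocallyDominates (δ : Q → A → B → D) (dist : D → FDist Q)
    (sA : Q → FDist A) (v : Q → ℝ) : Prop :=
  ∀ q, v q ≤ valStratGF (fun a b => lift dist v (δ q a b)) (sA q)

/-- Transition function ι of the MDP induced by a positional Player A strategy. -/
def stepB [DecidableEq B] (δ : Q → A → B → D) (dist : D → FDist Q)
    (sA : Q → FDist A) (q : Q) (b : B) (q' : Q) : ℝ :=
  step δ dist (sA q) (dirac b) q q'

/-- An end component of the MDP induced by the positional Player A strategy `sA`. -/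
structure EndComp [DecidableEq B] (δ : Q → A → B → D) (dist : D → FDist Q)
    (sA : Q → FDist A) where
  states : Set Q
  acts : Q → Set B
  acts_nonempty : ∀ q ∈ states, (acts q).Nonempty
  closed : ∀ q ∈ states, ∀ b ∈ acts q, ∀ q', stepB δ dist sA q b q' ≠ 0 → q' ∈ states
  connected : ∀ q ∈ states, ∀ q' ∈ states,
    Relation.ReflTransGen
      (fun x y => x ∈ states ∧ ∃ b ∈ acts x, stepB δ dist sA x b y ≠ 0) q q'

/-- `S_D` : the Nature states having a non-zero probability to reach `S`. -/
def natS (dist : D → FDist Q) (S : Set Q) : Set D :=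
  { d | ∃ q ∈ S, (dist d).1 q ≠ 0 }

/-- Progressive optimal local strategies at `q` w.r.t. the set `Gd`. -/
def Prog (δ : Q → A → B → D) (dist : D → FDist Q) (m : Q → ℝ) (q : Q)
    (Gd : Set Q) : Set (FDist A) :=
  { σA | σA ∈ OptA (locPay δ dist m q) ∧
      ∀ b ∈ optActs (locPay δ dist m q) σA, ∃ a ∈ supp σA, δ q a b ∈ natS dist Gd }

/-- Risky optimal local strategies at `q` w.r.t. the set `Bd`. -/
def Risk (δ : Q → A → B → D) (dist : D → FDist Q) (m : Q → ℝ) (q : Q)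
    (Bd : Set Q) : Set (FDist A) :=
  { σA | σA ∈ OptA (locPay δ dist m q) ∧
      ∃ b ∈ optActs (locPay δ dist m q) σA, ∃ a ∈ supp σA, δ q a b ∈ natS dist Bd }

/-- Efficient local strategies: progressive and not risky. -/
def Eff (δ : Q → A → B → D) (dist : D → FDist Q) (m : Q → ℝ) (q : Q)
    (Gd Bd : Set Q) : Set (FDist A) :=
  Prog δ dist m q Gd \ Risk δ dist m q Bd

/-- The increasing sequence of sets of secure states w.r.t. `Bd`. -/
def SecN (δ : Q → A → B → D) (dist : D → FDist Q) (m : Q → ℝ) (T : Q) (Bd : Set Q) :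
    ℕ → Set Q
  | 0 => {T}
  | n + 1 => SecN δ dist m T Bd n ∪
      { q | q ∉ Bd ∧ (Eff δ dist m q (SecN δ dist m T Bd n) Bd).Nonempty }

/-- The set of secure states w.r.t. `Bd`. -/
def Sec (δ : Q → A → B → D) (dist : D → FDist Q) (m : Q → ℝ) (T : Q) (Bd : Set Q) :
    Set Q :=
  (⋃ n : ℕ, SecN δ dist m T Bd n) ∪ { q | m q = 0 }

/-- The sequence of sets of bad states. -/
def BadN (δ : Q → A → B → D) (dist : D → FDist Q) (m : Q → ℝ) (T : Q) : ℕ → Set Q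
  | 0 => ∅
  | n + 1 => (Sec δ dist m T (BadN δ dist m T n))ᶜ

/-- The set of bad states. -/
def Bad (δ : Q → A → B → D) (dist : D → FDist Q) (m : Q → ℝ) (T : Q) : Set Q :=
  BadN δ dist m T (Fintype.card Q)

/-- `α[y]` : the total valuation extending the partial valuation `α : O∖E → [0,1]`
with the value `y` on `E`. -/
def extendVal {O : Type} (E : Set O) (α : O → ℝ) (y : ℝ) : O → ℝ :=
  fun o => if o ∈ E then y else α o

/-- The map `f_α : y ↦ val_{⟨F, α[y]⟩}`. -/
def fval {O : Type} (ρ : A → B → O) (E : Set O) (α : O → ℝ) (y : ℝ) : ℝ :=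
  valGF (fun a b => extendVal E α y (ρ a b))

/-- `v` is the least fixed point of `f_α` on `[0,1]`. -/
def IsLfpVal {O : Type} (ρ : A → B → O) (E : Set O) (α : O → ℝ) (v : ℝ) : Prop :=
  v ∈ Set.Icc (0:ℝ) 1 ∧ fval ρ E α v = v ∧
    ∀ y ∈ Set.Icc (0:ℝ) 1, fval ρ E α y = y → v ≤ y

/-- The game form `ρ` is reach-maximizable w.r.t. the partial valuation `α : O∖E → [0,1]`. -/
def RMwrt {O : Type} (ρ : A → B → O) (E : Set O) (α : O → ℝ) : Prop :=
  ∀ v : ℝ, IsLfpVal ρ E α v →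
    v = 0 ∨
      ∃ σA ∈ OptA (fun a b => extendVal E α v (ρ a b)),
        ∀ b ∈ optActs (fun a b => extendVal E α v (ρ a b)) σA,
          ∃ a ∈ supp σA, ρ a b ∉ E

/-- A reach-maximizable game form: RM w.r.t. every partial valuation of its outcomes. -/
def RMform {O : Type} (ρ : A → B → O) : Prop :=
  ∀ (E : Set O) (α : O → ℝ), (∀ o ∉ E, α o ∈ Set.Icc (0:ℝ) 1) → RMwrt ρ E α

/-- A determined game form. -/
def Determined {O : Type} (ρ : A → B → O) : Prop :=
  ∀ E : Set O, (∃ a, ∀ b, ρ a b ∈ E) ∨ (∃ b, ∀ a, ρ a b ∉ E)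

/-- Transition function of the three-state reachability game `C_{(F,α)}`:
state `0` is `q₀`, state `1` is the target `⊤`, state `2` is the bin `⊥`. -/
def triδ {O : Type} (ρ : A → B → O) (E : Set O) :
    Fin 3 → A → B → (Fin 3 ⊕ {o : O // o ∉ E}) :=
  fun s a b =>
    if s = 0 then
      if h : ρ a b ∈ E then Sum.inl 0 else Sum.inr ⟨ρ a b, h⟩
    else Sum.inl s

/-- Nature distributions of the three-state reachability game `C_{(F,α)}`. -/
def triDist {O : Type} (E : Set O) (α : O → ℝ)
    (hα : ∀ o ∉ E, α o ∈ Set.Icc (0:ℝ) 1) :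
    (Fin 3 ⊕ {o : O // o ∉ E}) → FDist (Fin 3) := fun d =>
  match d with
  | Sum.inl t => dirac t
  | Sum.inr x =>
      ⟨![0, α x.1, 1 - α x.1], by
        obtain ⟨h0, h1⟩ := hα x.1 x.2
        constructor
        · intro s
          fin_cases s <;> simp <;> linarith
        · simp [Fin.sum_univ_three]⟩

/-- An abstract (finite) game form with actions `A` and `B`. -/
structure GameForm (A B : Type) where
  O : Type
  fin : Fintype O
  ρ : A → B → O

/-- All local interactions of the arena `δ` belong to the set `𝒢` of game forms
(up to a renaming of the outcomes into Nature states). -/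
def UsesForms {Q D : Type} (𝒢 : Set (GameForm A B)) (δ : Q → A → B → D) : Prop :=
  ∀ q, ∃ F ∈ 𝒢, ∃ g : F.O → D, δ q = fun a b => g (F.ρ a b)

/-- The sequence of iterates of Δ starting from the valuation `1_{⊤}`. -/
def vseq (δ : Q → A → B → D) (dist : D → FDist Q) (T : Q) : ℕ → Q → ℝ
  | 0 => fun q => if q = T then 1 else 0
  | n + 1 => Δop δ dist T (vseq δ dist T n)

/-- Relevant paths w.r.t. the strategy `sA` from the state `q₀`: the pair `(h, q)`
encodes the path `h · q` (history `h`, current state `q`). -/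
inductive Relevant [DecidableEq B] (δ : Q → A → B → D) (dist : D → FDist Q)
    (m : Q → ℝ) (sA : Strat Q A) (q₀ : Q) : List Q → Q → Prop
  | base : Relevant δ dist m sA q₀ [] q₀
  | step {h : List Q} {q q' : Q} :
      Relevant δ dist m sA q₀ h q →
      (∃ b ∈ optActs (locPay δ dist m q) (sA h q),
        0 < CRG.step δ dist (sA h q) (dirac b) q q') →
      Relevant δ dist m sA q₀ (h ++ [q]) q'

end CRG

/-!
On a state that enters the sequence `SecN Bad` at level `r + 1`, Player A plays an efficient
local strategy of that level: it is optimal in the local game valued by `m`, against every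
optimal answer it keeps off `Bad` and moves with probability at least `2β` to level `≤ r`, and
every non-optimal answer concedes a gap `≥ 2β` (finitely many states and actions make these
bounds uniform). Elsewhere Player A plays a strategy built from the finite-horizon values,
under which a valuation `u ≥ m - ε` increases strictly in expectation wherever `u > 0`.

For the combined positional strategy, the valuation equal to `max 0 (u - θ)` on `Bad` and to
`max 0 (m - θ (1 - β ^ rank))` elsewhere increases strictly in expectation wherever it is
positive: along optimal answers the cost `1 - β ^ rank` drops by at least `β ^ (max rank)`, and
non-optimal answers pay for the slack `θ + ε`. A submartingale argument turns such a drift into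
a lower bound on the probability of reaching the target. Letting `θ → 0` gives optimality on
`Sec Bad`, which is the complement of `Bad` since `Bad` is a fixed point of `Bd ↦ (Sec Bd)ᶜ`.
-/

namespace FDist

variable {X : Type} [Fintype X]

lemma nonneg (σ : FDist X) (x : X) : 0 ≤ σ.1 x := σ.2.1 x

lemma sum_eq_one (σ : FDist X) : ∑ x, σ.1 x = 1 := σ.2.2

lemma le_one (σ : FDist X) (x : X) : σ.1 x ≤ 1 :=
  (Finset.single_le_sum (fun y _ => σ.nonneg y) (Finset.mem_univ x)).trans σ.sum_eq_one.le

lemma sum_mul_sub (σ : FDist X) (f : X → ℝ) (c : ℝ) :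
    ∑ x, σ.1 x * (f x - c) = ∑ x, σ.1 x * f x - c := by
  simp only [mul_sub, Finset.sum_sub_distrib, ← Finset.sum_mul, σ.sum_eq_one, one_mul]

lemma sum_mul_le_sum_mul (σ : FDist X) {f g : X → ℝ}
    (h : ∀ x, σ.1 x ≠ 0 → f x ≤ g x) : ∑ x, σ.1 x * f x ≤ ∑ x, σ.1 x * g x := by
  refine Finset.sum_le_sum fun x _ => ?_
  by_cases hx : σ.1 x = 0
  · simp [hx]
  · exact mul_le_mul_of_nonneg_left (h x hx) (σ.nonneg x)

lemma sum_mul_le_sum_mul_add (σ : FDist X) {f g : X → ℝ} {c : ℝ}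
    (h : ∀ x, σ.1 x ≠ 0 → f x ≤ g x + c) : ∑ x, σ.1 x * f x ≤ ∑ x, σ.1 x * g x + c := by
  have := σ.sum_mul_le_sum_mul (f := fun x => f x - c) (g := g) fun x hx => by linarith [h x hx]
  rw [σ.sum_mul_sub] at this
  linarith

lemma le_sum_mul (σ : FDist X) {f : X → ℝ} {c : ℝ}
    (h : ∀ x, c ≤ f x) : c ≤ ∑ x, σ.1 x * f x :=
  calc c = ∑ x, σ.1 x * c := by rw [← Finset.sum_mul, σ.sum_eq_one, one_mul]
    _ ≤ ∑ x, σ.1 x * f x := σ.sum_mul_le_sum_mul fun x _ => h x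

lemma sum_mul_one_sub_pow_le (σ : FDist X) {β : ℝ} (hβ : 0 < β)
    {k : X → ℕ} {r R : ℕ} (hrR : r + 1 ≤ R) (hk : ∀ x, k x ≤ R) {x₀ : X}
    (hx₀ : 2 * β ≤ σ.1 x₀) (hkx₀ : k x₀ ≤ r) :
    ∑ x, σ.1 x * (1 - β ^ k x) ≤ 1 - β ^ (r + 1) - β ^ R := by
  have hβ1 : 2 * β ≤ 1 := hx₀.trans (σ.le_one x₀)
  have hpow {i j : ℕ} (h : i ≤ j) : β ^ j ≤ β ^ i := pow_le_pow_of_le_one hβ.le (by linarith) h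
  have hx₀le : σ.1 x₀ * (β ^ k x₀ - β ^ R) ≤ ∑ x, σ.1 x * (β ^ k x - β ^ R) :=
    Finset.single_le_sum (f := fun x => σ.1 x * (β ^ k x - β ^ R))
      (fun x _ => mul_nonneg (σ.nonneg x) (sub_nonneg.2 (hpow (hk x)))) (Finset.mem_univ x₀)
  have hsum : ∑ x, σ.1 x * (1 - β ^ k x) = 1 - ∑ x, σ.1 x * β ^ k x := by
    simp [mul_sub, Finset.sum_sub_distrib, σ.sum_eq_one]
  rw [σ.sum_mul_sub] at hx₀le
  have h2 : 2 * β * (β ^ r - β ^ R) ≤ σ.1 x₀ * (β ^ k x₀ - β ^ R) :=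
    mul_le_mul hx₀ (by linarith [hpow hkx₀]) (sub_nonneg.2 (hpow (by omega))) (σ.nonneg x₀)
  have h3 : 2 * β * β ^ R ≤ β ^ (r + 1) :=
    (mul_le_of_le_one_left (pow_nonneg hβ.le R) hβ1).trans (hpow hrR)
  rw [pow_succ] at h3
  rw [hsum, pow_succ]
  linarith

variable (X) in
def uniform [Nonempty X] : FDist X :=
  ⟨fun _ => (Fintype.card X : ℝ)⁻¹, fun _ => by positivity, by simp⟩

instance [Nonempty X] : Nonempty (FDist X) := ⟨uniform X⟩

end FDist

open Filter Topology in
lemma exists_forall_iSup_sub_le {ι : Type*} [Finite ι] {f : ℕ → ι → ℝ} (hf : Monotone f)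
    (hbdd : ∀ i, BddAbove (Set.range fun n => f n i)) {ε : ℝ} (hε : 0 < ε) :
    ∃ N, ∀ i, (⨆ n, f n i) - ε ≤ f N i := by
  have h : ∀ i, ∀ᶠ n in atTop, (⨆ n, f n i) - ε < f n i := fun i =>
    (tendsto_atTop_ciSup (fun _ _ hnm => hf hnm i) (hbdd i)).eventually_const_lt (by linarith)
  obtain ⟨N, hN⟩ := (eventually_all.2 h).exists
  exact ⟨N, fun i => (hN i).le⟩

open Filter Topology in
lemma eventually_nhdsGT_le_of_pos {x : ℝ} (hx : 0 < x) : ∀ᶠ p in 𝓝[>] (0 : ℝ), p ≤ x :=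
  mem_of_superset (Ioc_mem_nhdsGT hx) fun _ hp => hp.2

lemma Set.exists_le_card_eq_succ_of_monotone {α : Type*} [Finite α] {s : ℕ → Set α}
    (hs : Monotone s) : ∃ j ≤ Nat.card α, s j = s (j + 1) := by
  by_contra! hne
  have hcard : ∀ j ≤ Nat.card α + 1, j ≤ (s j).ncard := by
    intro j
    induction j with
    | zero => simp
    | succ j ih =>
      intro hj
      have := Set.ncard_lt_ncard ((hs (Nat.le_add_right j 1)).ssubset_of_ne (hne j (by omega)))
      have := ih (by omega)
      omega
  have := hcard _ le_rfl
  have := Set.ncard_le_card (s (Nat.card α + 1))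
  omega

namespace CRG

section NormalForm

variable {A B : Type} [Fintype A] [Fintype B]

lemma out_eq_sum_outB (u : A → B → ℝ) (σA : FDist A) (σB : FDist B) :
    out u σA σB = ∑ b, σB.1 b * outB u σA b := by
  simp only [out, outB, Finset.mul_sum]
  rw [Finset.sum_comm]
  exact Finset.sum_congr rfl fun b _ => Finset.sum_congr rfl fun a _ => by ring

lemma out_dirac (u : A → B → ℝ) (σA : FDist A) (b : B) :
    out u σA (dirac b) = outB u σA b := by
  rw [out_eq_sum_outB, Finset.sum_eq_single b (fun b' _ hb' => by simp [dirac, hb'])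
    (fun h => absurd (Finset.mem_univ b) h)]
  simp [dirac]

lemma abs_out_le (u : A → B → ℝ) (σA : FDist A) (σB : FDist B) :
    |out u σA σB| ≤ ∑ a, ∑ b, |u a b| := by
  refine (Finset.abs_sum_le_sum_abs _ _).trans (Finset.sum_le_sum fun a _ =>
    (Finset.abs_sum_le_sum_abs _ _).trans (Finset.sum_le_sum fun b _ => ?_))
  rw [abs_mul, abs_of_nonneg (mul_nonneg (σA.nonneg a) (σB.nonneg b))]
  exact mul_le_of_le_one_left (abs_nonneg _)
    (mul_le_one₀ (σA.le_one a) (σB.nonneg b) (σB.le_one b))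

lemma valStratGF_le_out (u : A → B → ℝ) (σA : FDist A) (σB : FDist B) :
    valStratGF u σA ≤ out u σA σB :=
  ciInf_le ⟨-∑ a, ∑ b, |u a b|, by
    rintro _ ⟨σB, rfl⟩
    exact neg_le_of_abs_le (abs_out_le u σA σB)⟩ σB

lemma valStratGF_le_outB (u : A → B → ℝ) (σA : FDist A) (b : B) :
    valStratGF u σA ≤ outB u σA b :=
  out_dirac u σA b ▸ valStratGF_le_out u σA (dirac b)

lemma le_valStratGF [Nonempty B] {u : A → B → ℝ} {σA : FDist A} {c : ℝ}
    (h : ∀ b, c ≤ outB u σA b) : c ≤ valStratGF u σA :=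
  le_ciInf fun σB => out_eq_sum_outB u σA σB ▸ σB.le_sum_mul h

lemma valStratGF_le_valGF [Nonempty B] (u : A → B → ℝ) (σA : FDist A) :
    valStratGF u σA ≤ valGF u :=
  le_ciSup ⟨∑ a, ∑ b, |u a b|, by
    rintro _ ⟨σ, rfl⟩
    exact (valStratGF_le_out u σ (FDist.uniform B)).trans (le_of_abs_le (abs_out_le u σ _))⟩ σA

lemma valGF_le [Nonempty A] {u : A → B → ℝ} {c : ℝ} (h : ∀ σA, valStratGF u σA ≤ c) :
    valGF u ≤ c :=
  ciSup_le h

lemma exists_outB_le_valGF [Nonempty B] (u : A → B → ℝ) (σA : FDist A) :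
    ∃ b, outB u σA b ≤ valGF u := by
  obtain ⟨b, -, hb⟩ := Finset.exists_min_image Finset.univ (outB u σA) Finset.univ_nonempty
  exact ⟨b, (le_valStratGF fun b' => hb b' (Finset.mem_univ b')).trans
    (valStratGF_le_valGF u σA)⟩

variable [Nonempty A] [Nonempty B]

lemma valGF_nonneg {u : A → B → ℝ} (h : ∀ a b, 0 ≤ u a b) : 0 ≤ valGF u :=
  (le_valStratGF fun b => (FDist.uniform A).le_sum_mul fun a => h a b).trans
    (valStratGF_le_valGF u (FDist.uniform A))

lemma valGF_le_one {u : A → B → ℝ} (h : ∀ a b, u a b ≤ 1) : valGF u ≤ 1 :=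
  valGF_le fun σA => (valStratGF_le_outB u σA (Classical.arbitrary B)).trans <|
    (σA.sum_mul_le_sum_mul fun a _ => h a _).trans (by simp [FDist.sum_eq_one])

lemma valGF_le_valGF_add {u u' : A → B → ℝ} {ε : ℝ} (h : ∀ a b, u a b ≤ u' a b + ε) :
    valGF u ≤ valGF u' + ε := by
  refine valGF_le fun σA => ?_
  suffices valStratGF u σA - ε ≤ valStratGF u' σA by
    linarith [valStratGF_le_valGF u' σA]
  refine le_valStratGF fun b => ?_
  have : outB u σA b ≤ outB u' σA b + ε := σA.sum_mul_le_sum_mul_add fun a _ => h a b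
  linarith [valStratGF_le_outB u σA b]

end NormalForm

section Arena

variable {A B Q D : Type} [Fintype Q]
variable (δ : Q → A → B → D) (dist : D → FDist Q)

lemma locPay_le_locPay_add {v v' : Q → ℝ} {ε : ℝ} (h : ∀ x, v x ≤ v' x + ε) (q : Q) (a : A)
    (b : B) : locPay δ dist v q a b ≤ locPay δ dist v' q a b + ε :=
  (dist (δ q a b)).sum_mul_le_sum_mul_add fun x _ => h x

lemma locPay_nonneg {v : Q → ℝ} (hv : 0 ≤ v) (q : Q) (a : A) (b : B) :
    0 ≤ locPay δ dist v q a b :=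
  (dist (δ q a b)).le_sum_mul hv

lemma locPay_le_one {v : Q → ℝ} (hv : v ≤ 1) (q : Q) (a : A) (b : B) :
    locPay δ dist v q a b ≤ 1 :=
  ((dist _).sum_mul_le_sum_mul fun x _ => hv x).trans (by simp [FDist.sum_eq_one])

variable [Fintype A]

def next (σ : FDist A) (q : Q) (b : B) : FDist Q :=
  ⟨fun x => ∑ a, σ.1 a * (dist (δ q a b)).1 x,
    fun x => Finset.sum_nonneg fun a _ => mul_nonneg (σ.nonneg a) ((dist _).nonneg x), by
    rw [Finset.sum_comm]
    simp [← Finset.mul_sum, FDist.sum_eq_one]⟩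

lemma outB_locPay (f : Q → ℝ) (σ : FDist A) (q : Q) (b : B) :
    outB (locPay δ dist f q) σ b = ∑ x, (next δ dist σ q b).1 x * f x := by
  simp only [outB, locPay, lift, next, Finset.mul_sum, Finset.sum_mul]
  rw [Finset.sum_comm]
  exact Finset.sum_congr rfl fun x _ => Finset.sum_congr rfl fun a _ => by ring

lemma outB_locPay_le_add {f g : Q → ℝ} {c : ℝ} {σ : FDist A} {q : Q} {b : B}
    (h : ∀ x, (next δ dist σ q b).1 x ≠ 0 → f x ≤ g x + c) :
    outB (locPay δ dist f q) σ b ≤ outB (locPay δ dist g q) σ b + c := by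
  rw [outB_locPay, outB_locPay]
  exact (next δ dist σ q b).sum_mul_le_sum_mul_add h

variable [Fintype B]

lemma step_eq_sum_next (σA : FDist A) (σB : FDist B) (q x : Q) :
    step δ dist σA σB q x = ∑ b, σB.1 b * (next δ dist σA q b).1 x := by
  simp only [step, next, Finset.mul_sum]
  rw [Finset.sum_comm]
  exact Finset.sum_congr rfl fun b _ => Finset.sum_congr rfl fun a _ => by ring

lemma step_nonneg (σA : FDist A) (σB : FDist B) (q x : Q) : 0 ≤ step δ dist σA σB q x := by
  rw [step_eq_sum_next]
  exact Finset.sum_nonneg fun b _ => mul_nonneg (σB.nonneg b) ((next δ dist σA q b).nonneg x)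

lemma sum_step_mul (σA : FDist A) (σB : FDist B) (q : Q) (f : Q → ℝ) :
    ∑ x, step δ dist σA σB q x * f x = ∑ b, σB.1 b * outB (locPay δ dist f q) σA b := by
  simp only [step_eq_sum_next, outB_locPay, Finset.sum_mul, Finset.mul_sum]
  rw [Finset.sum_comm]
  exact Finset.sum_congr rfl fun b _ => Finset.sum_congr rfl fun x _ => by ring

lemma sum_step_mul_nonneg {σA : FDist A} {σB : FDist B} {q : Q} {f : Q → ℝ} (hf : 0 ≤ f) :
    0 ≤ ∑ x, step δ dist σA σB q x * f x :=
  Finset.sum_nonneg fun x _ => mul_nonneg (step_nonneg δ dist σA σB q x) (hf x)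

lemma sum_step_mul_le_one {σA : FDist A} {σB : FDist B} {q : Q} {f : Q → ℝ} (hf : f ≤ 1) :
    ∑ x, step δ dist σA σB q x * f x ≤ 1 := by
  rw [sum_step_mul]
  exact (σB.sum_mul_le_sum_mul fun b _ => by
    simpa [outB_locPay, FDist.sum_eq_one] using
      (next δ dist σA q b).sum_mul_le_sum_mul fun x _ => hf x).trans (by simp [FDist.sum_eq_one])

lemma step_dirac (σA : FDist A) (b : B) (q x : Q) :
    step δ dist σA (dirac b) q x = (next δ dist σA q b).1 x := by
  rw [step_eq_sum_next, Finset.sum_eq_single b (fun b' _ hb' => by simp [dirac, hb'])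
    (fun h => absurd (Finset.mem_univ b) h)]
  simp [dirac]

end Arena

section ValueIteration

variable {A B Q D : Type} [Fintype A] [Fintype B] [Fintype Q]
variable {δ : Q → A → B → D} {dist : D → FDist Q} {T : Q} {m : Q → ℝ}

lemma IsLfpDelta.target (hm : IsLfpDelta δ dist T m) : m T = 1 := by
  simpa [Δop] using (congrFun hm.2.1 T).symm

lemma IsLfpDelta.valGF_locPay (hm : IsLfpDelta δ dist T m) {q : Q} (hq : q ≠ T) :
    valGF (locPay δ dist m q) = m q := by
  have := congrFun hm.2.1 q
  simp only [Δop, hq, if_false] at this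
  exact this

variable [Nonempty A] [Nonempty B]

lemma Δop_le_Δop_add {v v' : Q → ℝ} {ε : ℝ} (hε : 0 ≤ ε) (h : ∀ x, v x ≤ v' x + ε) (q : Q) :
    Δop δ dist T v q ≤ Δop δ dist T v' q + ε := by
  by_cases hq : q = T
  · simp [Δop, hq, hε]
  · simp only [Δop, hq, if_false]
    exact valGF_le_valGF_add (locPay_le_locPay_add δ dist h q)

lemma Δop_mono : Monotone (Δop δ dist T) := fun v v' h q => by
  simpa using Δop_le_Δop_add le_rfl (fun x => by simpa using h x) q

lemma Δop_mem_Icc {v : Q → ℝ} (h0 : 0 ≤ v) (h1 : v ≤ 1) (q : Q) :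
    Δop δ dist T v q ∈ Set.Icc (0 : ℝ) 1 := by
  by_cases hq : q = T
  · simp [Δop, hq]
  · simp only [Δop, hq, if_false]
    exact ⟨valGF_nonneg (locPay_nonneg δ dist h0 q), valGF_le_one (locPay_le_one δ dist h1 q)⟩

lemma vseq_mem_Icc (n : ℕ) (q : Q) : vseq δ dist T n q ∈ Set.Icc (0 : ℝ) 1 := by
  induction n generalizing q with
  | zero => by_cases hq : q = T <;> simp [vseq, hq]
  | succ n ih => exact Δop_mem_Icc (fun x => (ih x).1) (fun x => (ih x).2) q

lemma bddAbove_vseq (q : Q) : BddAbove (Set.range fun n => vseq δ dist T n q) :=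
  ⟨1, by rintro _ ⟨n, rfl⟩; exact (vseq_mem_Icc n q).2⟩

lemma vseq_monotone : Monotone (vseq δ dist T) := by
  refine monotone_nat_of_le_succ fun n => ?_
  induction n with
  | zero =>
    intro q
    by_cases hq : q = T
    · simp [vseq, Δop, hq]
    · simpa [vseq, hq] using (vseq_mem_Icc 1 q).1
  | succ n ih => exact Δop_mono ih

lemma IsLfpDelta.vseq_le (hm : IsLfpDelta δ dist T m) (n : ℕ) : vseq δ dist T n ≤ m := by
  induction n with
  | zero =>
    intro q
    by_cases hq : q = T
    · simp [vseq, hq, hm.target]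
    · simpa [vseq, hq] using (hm.1 q).1
  | succ n ih => exact hm.2.1 ▸ Δop_mono ih

/-- The supremum of the iterates is a fixed point of `Δ` since `Δ` is nonexpansive and, `Q`
being finite, the iterates converge uniformly. -/
lemma IsLfpDelta.iSup_vseq (hm : IsLfpDelta δ dist T m) (q : Q) :
    ⨆ n, vseq δ dist T n q = m q := by
  set L : Q → ℝ := fun q => ⨆ n, vseq δ dist T n q
  have hle (n : ℕ) : vseq δ dist T n ≤ L := fun q => le_ciSup (bddAbove_vseq q) n
  have hL_le : L ≤ Δop δ dist T L := fun q => ciSup_le fun n =>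
    (vseq_monotone n.le_succ q).trans (Δop_mono (hle n) q)
  have hΔ_le : Δop δ dist T L ≤ L := fun q => le_of_forall_pos_le_add fun ε hε => by
    obtain ⟨N, hN⟩ := exists_forall_iSup_sub_le (f := vseq δ dist T) vseq_monotone bddAbove_vseq hε
    calc Δop δ dist T L q ≤ vseq δ dist T (N + 1) q + ε :=
          Δop_le_Δop_add hε.le (fun x => by linarith [hN x]) q
      _ ≤ L q + ε := by linarith [hle (N + 1) q]
  have hL_mem (x : Q) : L x ∈ Set.Icc (0 : ℝ) 1 :=
    ⟨(vseq_mem_Icc 0 x).1.trans (hle 0 x), ciSup_le fun n => (vseq_mem_Icc n x).2⟩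
  exact le_antisymm (ciSup_le fun n => hm.vseq_le n q)
    (hm.2.2 L hL_mem (le_antisymm hΔ_le hL_le) q)

lemma IsLfpDelta.exists_vseq_ge (hm : IsLfpDelta δ dist T m) {ε : ℝ} (hε : 0 < ε) :
    ∃ N, ∀ q, m q - ε ≤ vseq δ dist T N q := by
  obtain ⟨N, hN⟩ := exists_forall_iSup_sub_le (f := vseq δ dist T) vseq_monotone bddAbove_vseq hε
  exact ⟨N, fun q => hm.iSup_vseq q ▸ hN q⟩

end ValueIteration

section Reachability

variable {A B Q D : Type} [Fintype A] [Fintype B] [Fintype Q]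
variable {δ : Q → A → B → D} {dist : D → FDist Q} {T : Q}

lemma reachSetNAux_succ_of_notMem {S : Set Q} {sA : Strat Q A} {sB : Strat Q B} {n : ℕ}
    {h : List Q} {q : Q} (hq : q ∉ S) : reachSetNAux δ dist S (n + 1) sA sB h q =
      ∑ x, step δ dist (sA h q) (sB h q) q x * reachSetNAux δ dist S n sA sB (h ++ [q]) x := by
  simp [reachSetNAux, hq]

lemma reachSetNAux_mem_Icc (S : Set Q) (sA : Strat Q A) (sB : Strat Q B) (n : ℕ) (h : List Q)
    (q : Q) : reachSetNAux δ dist S n sA sB h q ∈ Set.Icc (0 : ℝ) 1 := by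
  induction n generalizing h q with
  | zero => by_cases hq : q ∈ S <;> simp [reachSetNAux, hq]
  | succ n ih =>
    by_cases hq : q ∈ S
    · simp [reachSetNAux, hq]
    · rw [reachSetNAux_succ_of_notMem hq]
      exact ⟨sum_step_mul_nonneg δ dist fun x => (ih _ x).1,
        sum_step_mul_le_one δ dist fun x => (ih _ x).2⟩

lemma reachN_le_reach (sA : Strat Q A) (sB : Strat Q B) (n : ℕ) (q : Q) :
    reachN δ dist T n sA sB q ≤ reach δ dist T sA sB q :=
  le_ciSup (f := fun n => reachN δ dist T n sA sB q)
    ⟨1, by rintro _ ⟨n, rfl⟩; exact (reachSetNAux_mem_Icc _ sA sB n [] q).2⟩ n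

lemma reach_nonneg (sA : Strat Q A) (sB : Strat Q B) (q : Q) : 0 ≤ reach δ dist T sA sB q :=
  (reachSetNAux_mem_Icc (δ := δ) (dist := dist) _ sA sB 0 [] q).1.trans (reachN_le_reach sA sB 0 q)

lemma valA_le_reach (sA : Strat Q A) (sB : Strat Q B) (q : Q) :
    valA δ dist T sA q ≤ reach δ dist T sA sB q :=
  ciInf_le ⟨0, by rintro _ ⟨sB, rfl⟩; exact reach_nonneg sA sB q⟩ sB

variable [Nonempty B]

instance {X : Type} [Fintype X] [Nonempty X] : Nonempty (Strat Q X) :=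
  ⟨fun _ _ => FDist.uniform X⟩

lemma le_valA {sA : Strat Q A} {q : Q} {c : ℝ} (h : ∀ sB, c ≤ reach δ dist T sA sB q) :
    c ≤ valA δ dist T sA q :=
  le_ciInf h

variable {m : Q → ℝ}

/-- Player B keeps the reachability probability below `m` by always answering with an action
that is optimal against the current mixed action in the local game valued by `m`. -/
lemma IsLfpDelta.valA_le (hm : IsLfpDelta δ dist T m) (sA : Strat Q A) (q : Q) :
    valA δ dist T sA q ≤ m q := by
  choose b hb using fun h x => exists_outB_le_valGF (locPay δ dist m x) (sA h x)
  set sB : Strat Q B := fun h x => dirac (b h x)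
  have key (n : ℕ) : ∀ h x, reachSetNAux δ dist {T} n sA sB h x ≤ m x := by
    induction n with
    | zero => intro h x; by_cases hx : x = T <;> simp [reachSetNAux, hx, hm.target, (hm.1 x).1]
    | succ n ih =>
      intro h x
      by_cases hx : x = T
      · simp [reachSetNAux, hx, hm.target]
      rw [reachSetNAux_succ_of_notMem (Set.notMem_singleton_iff.2 hx)]
      simp only [sB, step_dirac]
      calc ∑ y, (next δ dist (sA h x) x (b h x)).1 y * reachSetNAux δ dist {T} n sA _ _ y
          ≤ ∑ y, (next δ dist (sA h x) x (b h x)).1 y * m y :=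
            FDist.sum_mul_le_sum_mul _ fun y _ => ih _ y
        _ = outB (locPay δ dist m x) (sA h x) (b h x) := (outB_locPay δ dist m _ x _).symm
        _ ≤ m x := (hb h x).trans (hm.valGF_locPay hx).le
  exact (valA_le_reach sA _ q).trans (ciSup_le fun n => key n [] q)

lemma IsLfpDelta.maximizable [Nonempty A] (hm : IsLfpDelta δ dist T m) {sA : Strat Q A} {q : Q}
    (h : valA δ dist T sA q = m q) : Maximizable δ dist T q := by
  refine ⟨sA, le_antisymm (le_ciSup (f := fun sA => valA δ dist T sA q) ⟨m q, ?_⟩ sA)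
    (ciSup_le fun sA' => h ▸ hm.valA_le sA' q)⟩
  rintro _ ⟨sA', rfl⟩
  exact hm.valA_le sA' q

end Reachability

section Drift

variable {A B Q D : Type} [Fintype A] [Fintype B] [Fintype Q]
variable (δ : Q → A → B → D) (dist : D → FDist Q) (T : Q)
variable (v : Q → ℝ) (sA : Q → FDist A) (sB : Strat Q B)

/-- `expectedPot n h q` is the expected value of `v` after `n` rounds from `q` after the history
`h`, the play being stopped at the target with value `1`; `activeProb n h q` is the probability
that the play is then still off the target, in a state where `v > 0`. -/
def expectedPot : ℕ → List Q → Q → ℝ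
  | 0, _, q => v q
  | n + 1, h, q =>
    if q = T then 1 else ∑ x, step δ dist (sA q) (sB h q) q x * expectedPot n (h ++ [q]) x

def activeProb : ℕ → List Q → Q → ℝ
  | 0, _, q => if q ≠ T ∧ 0 < v q then 1 else 0
  | n + 1, h, q =>
    if q = T then 0 else ∑ x, step δ dist (sA q) (sB h q) q x * activeProb n (h ++ [q]) x

variable {δ dist T v sA sB} {η : ℝ}

lemma expectedPot_succ_of_ne {n : ℕ} {h : List Q} {q : Q} (hq : q ≠ T) :
    expectedPot δ dist T v sA sB (n + 1) h q =
      ∑ x, step δ dist (sA q) (sB h q) q x * expectedPot δ dist T v sA sB n (h ++ [q]) x := by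
  simp [expectedPot, hq]

lemma activeProb_succ_of_ne {n : ℕ} {h : List Q} {q : Q} (hq : q ≠ T) :
    activeProb δ dist T v sA sB (n + 1) h q =
      ∑ x, step δ dist (sA q) (sB h q) q x * activeProb δ dist T v sA sB n (h ++ [q]) x := by
  simp [activeProb, hq]

lemma activeProb_nonneg (n : ℕ) (h : List Q) (q : Q) : 0 ≤ activeProb δ dist T v sA sB n h q := by
  induction n generalizing h q with
  | zero => unfold activeProb; split_ifs <;> norm_num
  | succ n ih =>
    by_cases hq : q = T
    · simp [activeProb, hq]
    · rw [activeProb_succ_of_ne hq]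
      exact sum_step_mul_nonneg δ dist fun x => ih _ x

lemma expectedPot_le_one (hv1 : v ≤ 1) (n : ℕ) (h : List Q) (q : Q) :
    expectedPot δ dist T v sA sB n h q ≤ 1 := by
  induction n generalizing h q with
  | zero => exact hv1 q
  | succ n ih =>
    by_cases hq : q = T
    · simp [expectedPot, hq]
    · rw [expectedPot_succ_of_ne hq]
      exact sum_step_mul_le_one δ dist fun x => ih _ x

lemma expectedPot_le_reachSetNAux_add (hv1 : v ≤ 1) (n : ℕ) (h : List Q) (q : Q) :
    expectedPot δ dist T v sA sB n h q
      ≤ reachSetNAux δ dist {T} n (ofPos sA) sB h q + activeProb δ dist T v sA sB n h q := by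
  induction n generalizing h q with
  | zero =>
    by_cases hq : q = T
    · simpa [expectedPot, activeProb, reachSetNAux, hq] using hv1 T
    by_cases hvq : 0 < v q
    · simpa [expectedPot, activeProb, reachSetNAux, hq, hvq] using hv1 q
    · simpa [expectedPot, activeProb, reachSetNAux, hq, hvq] using le_of_not_gt hvq
  | succ n ih =>
    by_cases hq : q = T
    · simp [expectedPot, activeProb, reachSetNAux, hq]
    rw [expectedPot_succ_of_ne hq, activeProb_succ_of_ne hq,
      reachSetNAux_succ_of_notMem (Set.notMem_singleton_iff.2 hq), ← Finset.sum_add_distrib]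
    exact Finset.sum_le_sum fun x _ =>
      (mul_le_mul_of_nonneg_left (ih _ x) (step_nonneg δ dist _ _ _ _)).trans_eq (mul_add _ _ _)

lemma expectedPot_add_le (hv0 : 0 ≤ v) (hv1 : v ≤ 1)
    (hdrift : ∀ q, q ≠ T → 0 < v q → ∀ b, v q + η ≤ outB (locPay δ dist v q) (sA q) b)
    (n : ℕ) (h : List Q) (q : Q) :
    expectedPot δ dist T v sA sB n h q + η * activeProb δ dist T v sA sB n h q
      ≤ expectedPot δ dist T v sA sB (n + 1) h q := by
  induction n generalizing h q with
  | zero =>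
    by_cases hq : q = T
    · simpa [expectedPot, activeProb, hq] using hv1 T
    rw [expectedPot_succ_of_ne hq]
    by_cases hvq : 0 < v q
    · simpa [expectedPot, activeProb, hq, hvq, sum_step_mul] using
        (sB h q).le_sum_mul (hdrift q hq hvq)
    · simpa [expectedPot, activeProb, hq, hvq] using
        (le_of_not_gt hvq).trans (sum_step_mul_nonneg δ dist hv0)
  | succ n ih =>
    by_cases hq : q = T
    · simp [expectedPot, activeProb, hq]
    rw [expectedPot_succ_of_ne hq, expectedPot_succ_of_ne hq, activeProb_succ_of_ne hq,
      Finset.mul_sum, ← Finset.sum_add_distrib]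
    refine Finset.sum_le_sum fun x _ => ?_
    nlinarith [ih (h ++ [q]) x, step_nonneg δ dist (sA q) (sB h q) q x]

lemma le_expectedPot (hv0 : 0 ≤ v) (hv1 : v ≤ 1)
    (hdrift : ∀ q, q ≠ T → 0 < v q → ∀ b, v q + η ≤ outB (locPay δ dist v q) (sA q) b)
    (n : ℕ) (h : List Q) (q : Q) :
    v q + η * ∑ k ∈ Finset.range n, activeProb δ dist T v sA sB k h q
      ≤ expectedPot δ dist T v sA sB n h q := by
  induction n with
  | zero => simp [expectedPot]
  | succ n ih =>
    rw [Finset.sum_range_succ, mul_add]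
    linarith [expectedPot_add_le (sB := sB) hv0 hv1 hdrift n h q]

lemma le_reach_of_drift (hv0 : 0 ≤ v) (hv1 : v ≤ 1) (hη : 0 < η)
    (hdrift : ∀ q, q ≠ T → 0 < v q → ∀ b, v q + η ≤ outB (locPay δ dist v q) (sA q) b)
    (sB : Strat Q B) (q : Q) : v q ≤ reach δ dist T (ofPos sA) sB q := by
  refine le_of_forall_pos_le_add fun ζ hζ => ?_
  obtain ⟨n, hn⟩ := exists_nat_gt (1 / (η * ζ))
  rw [div_lt_iff₀ (by positivity)] at hn
  -- the expected number of active rounds is at most `1 / η`, so some round is rarely active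
  obtain ⟨k, -, hk⟩ : ∃ k < n, activeProb δ dist T v sA sB k [] q ≤ ζ := by
    by_contra! hcon
    have hsum := Finset.card_nsmul_le_sum (Finset.range n) _ ζ fun k hk =>
      (hcon k (Finset.mem_range.1 hk)).le
    rw [Finset.card_range, nsmul_eq_mul] at hsum
    have := mul_le_mul_of_nonneg_left hsum hη.le
    have := le_expectedPot (sB := sB) hv0 hv1 hdrift n [] q
    have := expectedPot_le_one (δ := δ) (dist := dist) (T := T) (sA := sA) (sB := sB) hv1 n [] q
    have : (0 : ℝ) ≤ v q := hv0 q
    nlinarith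
  have := le_expectedPot (sB := sB) hv0 hv1 hdrift k [] q
  have := expectedPot_le_reachSetNAux_add (δ := δ) (dist := dist) (T := T) (sA := sA) (sB := sB)
    hv1 k [] q
  have : reachSetNAux δ dist {T} k (ofPos sA) sB [] q ≤ reach δ dist T (ofPos sA) sB q :=
    reachN_le_reach (ofPos sA) sB k q
  have : 0 ≤ η * ∑ j ∈ Finset.range k, activeProb δ dist T v sA sB j [] q :=
    mul_nonneg hη.le (Finset.sum_nonneg fun j _ => activeProb_nonneg j [] q)
  linarith

end Drift

section SecureSets

variable {A B Q D : Type} [Fintype A] [Fintype B] [Fintype Q]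
variable {δ : Q → A → B → D} {dist : D → FDist Q} {m : Q → ℝ} {T : Q}

lemma natS_mono {S S' : Set Q} (h : S ⊆ S') : natS dist S ⊆ natS dist S' :=
  fun _ ⟨q, hq, hne⟩ => ⟨q, h hq, hne⟩

lemma Eff_mono {Gd Gd' Bd Bd' : Set Q} (hG : Gd ⊆ Gd') (hB : Bd' ⊆ Bd) (q : Q) :
    Eff δ dist m q Gd Bd ⊆ Eff δ dist m q Gd' Bd' := by
  rintro σ ⟨⟨hopt, hprog⟩, hnr⟩
  refine ⟨⟨hopt, fun b hb => ?_⟩,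
    fun ⟨_, b, hb, a, ha, hd⟩ => hnr ⟨hopt, b, hb, a, ha, natS_mono hB hd⟩⟩
  obtain ⟨a, ha, hd⟩ := hprog b hb
  exact ⟨a, ha, natS_mono hG hd⟩

lemma SecN_anti {Bd Bd' : Set Q} (h : Bd ⊆ Bd') (n : ℕ) :
    SecN δ dist m T Bd' n ⊆ SecN δ dist m T Bd n := by
  induction n with
  | zero => exact subset_rfl
  | succ n ih =>
    rintro q (hq | ⟨hq, σ, hσ⟩)
    · exact Or.inl (ih hq)
    · exact Or.inr ⟨fun hc => hq (h hc), σ, Eff_mono ih h q hσ⟩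

lemma Sec_anti {Bd Bd' : Set Q} (h : Bd ⊆ Bd') : Sec δ dist m T Bd' ⊆ Sec δ dist m T Bd :=
  Set.union_subset_union_left _ (Set.iUnion_mono fun n => SecN_anti h n)

lemma BadN_monotone : Monotone (BadN δ dist m T) := by
  refine monotone_nat_of_le_succ fun n => ?_
  induction n with
  | zero => exact Set.empty_subset _
  | succ n ih => exact Set.compl_subset_compl.2 (Sec_anti ih)

/-- The increasing sequence `BadN` of subsets of `Q` is stationary from step `|Q|` on. -/
lemma Bad_eq_compl_Sec : Bad δ dist m T = (Sec δ dist m T (Bad δ dist m T))ᶜ := by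
  obtain ⟨j, hj, hjs⟩ := Set.exists_le_card_eq_succ_of_monotone
    (BadN_monotone (δ := δ) (dist := dist) (m := m) (T := T))
  have hconst (n : ℕ) (hn : j ≤ n) : BadN δ dist m T n = BadN δ dist m T j := by
    induction n, hn using Nat.le_induction with
    | base => rfl
    | succ n _ ih =>
      change (Sec δ dist m T (BadN δ dist m T n))ᶜ = _
      rw [ih]
      exact hjs.symm
  rw [Nat.card_eq_fintype_card] at hj
  change BadN δ dist m T _ = BadN δ dist m T (Fintype.card Q + 1)
  rw [hconst _ hj, hconst (Fintype.card Q + 1) (by omega)]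

lemma mem_Sec_Bad_iff {q : Q} :
    q ∈ Sec δ dist m T (Bad δ dist m T) ↔ q ∉ Bad δ dist m T := by
  nth_rw 2 [Bad_eq_compl_Sec]
  exact not_not.symm

variable (δ dist m T) in
def secRank (Bd : Set Q) (q : Q) : ℕ :=
  if h : ∃ n, q ∈ SecN δ dist m T Bd n then Nat.find h else 0

lemma secRank_le {Bd : Set Q} {q : Q} {n : ℕ} (h : q ∈ SecN δ dist m T Bd n) :
    secRank δ dist m T Bd q ≤ n := by
  rw [secRank, dif_pos ⟨n, h⟩]
  exact Nat.find_min' _ h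

lemma exists_Eff_of_mem_SecN {Bd : Set Q} {q : Q} (h : ∃ n, q ∈ SecN δ dist m T Bd n)
    (hq : q ≠ T) : ∃ r, secRank δ dist m T Bd q = r + 1 ∧ q ∉ Bd ∧
      (Eff δ dist m q (SecN δ dist m T Bd r) Bd).Nonempty := by
  obtain ⟨r, hr⟩ : ∃ r, Nat.find h = r + 1 :=
    Nat.exists_eq_succ_of_ne_zero fun h0 => hq (by simpa [h0, SecN] using Nat.find_spec h)
  have hmem := Nat.find_spec h
  rw [hr] at hmem
  exact ⟨r, (dif_pos h).trans hr, hmem.resolve_left (Nat.find_min h (by omega))⟩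

end SecureSets

section Approximation

variable {A B Q D : Type} [Fintype A] [Fintype B] [Fintype Q]
variable {δ : Q → A → B → D} {dist : D → FDist Q} {T : Q}

variable (δ dist T) in
def chargedValue (N : ℕ) (κ : ℝ) (q : Q) : ℝ :=
  (Finset.range (N + 1)).sup' Finset.nonempty_range_add_one fun n => vseq δ dist T n q - n * κ

lemma vseq_sub_le_chargedValue {N n : ℕ} (hn : n ≤ N) (κ : ℝ) (q : Q) :
    vseq δ dist T n q - n * κ ≤ chargedValue δ dist T N κ q :=
  Finset.le_sup' (fun n => vseq δ dist T n q - n * κ) (Finset.mem_range_succ_iff.2 hn)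

/-- Where it is positive, `chargedValue` is attained at a horizon `k + 1`; a near-optimal local
strategy of the horizon-`(k + 1)` game then gains `κ / 2`, because the horizon-`k` values are
at most `chargedValue + k κ`. -/
lemma exists_drift_chargedValue [Nonempty A] (N : ℕ) {κ : ℝ} (hκ : 0 < κ) {q : Q} (hq : q ≠ T)
    (hpos : 0 < chargedValue δ dist T N κ q) : ∃ σ : FDist A, ∀ b,
      chargedValue δ dist T N κ q + κ / 2
        ≤ outB (locPay δ dist (chargedValue δ dist T N κ) q) σ b := by
  obtain ⟨n, hnN, hn⟩ := Finset.exists_mem_eq_sup' Finset.nonempty_range_add_one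
    fun n => vseq δ dist T n q - n * κ
  change chargedValue δ dist T N κ q = _ at hn
  obtain ⟨k, rfl⟩ : ∃ k, n = k + 1 := Nat.exists_eq_succ_of_ne_zero fun h0 => by
    simp [hn, h0, vseq, hq] at hpos
  have hvseq : vseq δ dist T (k + 1) q = valGF (locPay δ dist (vseq δ dist T k) q) := by
    change Δop δ dist T (vseq δ dist T k) q = _
    simp only [Δop, hq, if_false]
    rfl
  obtain ⟨σ, hσ⟩ := exists_lt_of_lt_ciSup (show vseq δ dist T (k + 1) q - κ / 2 <
    ⨆ σ, valStratGF (locPay δ dist (vseq δ dist T k) q) σ by rw [← valGF, ← hvseq]; linarith)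
  refine ⟨σ, fun b => ?_⟩
  have hk : k ≤ N := by simp at hnN; omega
  have := outB_locPay_le_add δ dist (σ := σ) (q := q) (b := b) (f := vseq δ dist T k)
    (g := chargedValue δ dist T N κ) (c := k * κ) fun x _ => by
      linarith [vseq_sub_le_chargedValue (δ := δ) (dist := dist) (T := T) hk κ x]
  have := valStratGF_le_outB (locPay δ dist (vseq δ dist T k) q) σ b
  push_cast at hn
  linarith

lemma IsLfpDelta.exists_approx_drift [Nonempty A] [Nonempty B] {m : Q → ℝ}
    (hm : IsLfpDelta δ dist T m) {ε : ℝ} (hε : 0 < ε) :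
    ∃ (u : Q → ℝ) (κ : ℝ) (σ : Q → FDist A), 0 < κ ∧ u ≤ m ∧ (∀ q, m q - ε ≤ u q) ∧
      ∀ q, q ≠ T → 0 < u q → ∀ b, u q + κ ≤ outB (locPay δ dist u q) (σ q) b := by
  obtain ⟨N, hN⟩ := hm.exists_vseq_ge (half_pos hε)
  set κ : ℝ := ε / (2 * (N + 1))
  have hκ : 0 < κ := by positivity
  have hNκ : N * κ ≤ ε / 2 := by
    rw [mul_div_assoc', div_le_div_iff₀ (by positivity) two_pos]
    nlinarith
  set u := chargedValue δ dist T N κ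
  have hdrift (q : Q) : ∃ σ : FDist A, q ≠ T → 0 < u q → ∀ b,
      u q + κ / 2 ≤ outB (locPay δ dist u q) σ b := by
    by_cases h : q ≠ T ∧ 0 < u q
    · exact (exists_drift_chargedValue N hκ h.1 h.2).imp fun σ hσ _ _ => hσ
    · exact ⟨FDist.uniform A, fun h1 h2 => (h ⟨h1, h2⟩).elim⟩
  choose σ hσ using hdrift
  refine ⟨u, κ / 2, σ, half_pos hκ, fun q => ?_, fun q => ?_, hσ⟩
  · exact Finset.sup'_le _ _ fun n _ => by
      linarith [hm.vseq_le n q, mul_nonneg (Nat.cast_nonneg n) hκ.le]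
  · linarith [hN q, vseq_sub_le_chargedValue (δ := δ) (dist := dist) (T := T) (le_refl N) κ q]

end Approximation

section Secure

variable {A B Q D : Type} [Fintype A] [Fintype B] [Fintype Q]
variable {δ : Q → A → B → D} {dist : D → FDist Q} {m : Q → ℝ} {T : Q}

variable (δ dist m) in
/-- A quantitative form of `σ ∈ Eff δ dist m q G Bd`. -/
structure IsSecureAt (G Bd : Set Q) (p : ℝ) (σ : FDist A) (q : Q) : Prop where
  optimal : valStratGF (locPay δ dist m q) σ = m q
  avoid : ∀ b ∈ optActs (locPay δ dist m q) σ, ∀ x ∈ Bd, (next δ dist σ q b).1 x = 0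
  progress : ∀ b ∈ optActs (locPay δ dist m q) σ, ∃ x ∈ G, p ≤ (next δ dist σ q b).1 x
  gap : ∀ b ∉ optActs (locPay δ dist m q) σ, m q + p ≤ outB (locPay δ dist m q) σ b

open Filter Topology in
lemma IsLfpDelta.eventually_isSecureAt (hm : IsLfpDelta δ dist T m) {G Bd : Set Q}
    {σ : FDist A} {q : Q} (hq : q ≠ T) (hσ : σ ∈ Eff δ dist m q G Bd) :
    ∀ᶠ p in 𝓝[>] 0, IsSecureAt δ dist m G Bd p σ q := by
  obtain ⟨⟨hopt, hprog⟩, hrisk⟩ := hσ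
  have hval : valStratGF (locPay δ dist m q) σ = m q := hopt.trans (hm.valGF_locPay hq)
  have havoid : ∀ b ∈ optActs (locPay δ dist m q) σ, ∀ x ∈ Bd, (next δ dist σ q b).1 x = 0 := by
    refine fun b hb x hx => Finset.sum_eq_zero fun a _ => ?_
    by_cases ha : σ.1 a = 0
    · rw [ha, zero_mul]
    · by_contra hne
      exact hrisk ⟨hopt, b, hb, a, ha, x, hx, right_ne_zero_of_mul hne⟩
  have hprogress (b : B) : ∀ᶠ p in 𝓝[>] 0,
      b ∈ optActs (locPay δ dist m q) σ → ∃ x ∈ G, p ≤ (next δ dist σ q b).1 x := by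
    by_cases hb : b ∈ optActs (locPay δ dist m q) σ
    · obtain ⟨a, ha, x, hx, hne⟩ := hprog b hb
      have hpos : 0 < (next δ dist σ q b).1 x :=
        (mul_pos ((σ.nonneg a).lt_of_ne' ha) (((dist _).nonneg x).lt_of_ne' hne)).trans_le
          (Finset.single_le_sum (f := fun a => σ.1 a * (dist (δ q a b)).1 x)
            (fun a _ => mul_nonneg (σ.nonneg a) ((dist _).nonneg x)) (Finset.mem_univ a))
      exact (eventually_nhdsGT_le_of_pos hpos).mono fun p hp _ => ⟨x, hx, hp⟩
    · exact Eventually.of_forall fun _ h => absurd h hb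
  have hgap (b : B) : ∀ᶠ p in 𝓝[>] 0,
      b ∉ optActs (locPay δ dist m q) σ → m q + p ≤ outB (locPay δ dist m q) σ b := by
    by_cases hb : b ∈ optActs (locPay δ dist m q) σ
    · exact Eventually.of_forall fun _ h => absurd hb h
    · have hlt : m q < outB (locPay δ dist m q) σ b :=
        hval ▸ (valStratGF_le_outB _ σ b).lt_of_ne (Ne.symm hb)
      exact (eventually_nhdsGT_le_of_pos (sub_pos.2 hlt)).mono fun p hp _ => by linarith
  filter_upwards [eventually_all.2 hprogress, eventually_all.2 hgap] with p hp hg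
  exact ⟨hval, havoid, fun b => hp b, fun b => hg b⟩

open Filter Topology in
lemma IsLfpDelta.exists_isSecureAt [Nonempty A] (hm : IsLfpDelta δ dist T m) (Bd : Set Q) :
    ∃ (σ : Q → FDist A) (β : ℝ), 0 < β ∧ β ≤ 1 ∧
      ∀ q, (∃ n, q ∈ SecN δ dist m T Bd n) → q ≠ T → ∃ r, secRank δ dist m T Bd q = r + 1 ∧
        q ∉ Bd ∧ IsSecureAt δ dist m (SecN δ dist m T Bd r) Bd (2 * β) (σ q) q := by
  have hex (q : Q) : ∃ (σ : FDist A) (r : ℕ), (∃ n, q ∈ SecN δ dist m T Bd n) → q ≠ T →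
      secRank δ dist m T Bd q = r + 1 ∧ q ∉ Bd ∧ σ ∈ Eff δ dist m q (SecN δ dist m T Bd r) Bd := by
    by_cases h : (∃ n, q ∈ SecN δ dist m T Bd n) ∧ q ≠ T
    · obtain ⟨r, hr, hqB, σ, hσ⟩ := exists_Eff_of_mem_SecN h.1 h.2
      exact ⟨σ, r, fun _ _ => ⟨hr, hqB, hσ⟩⟩
    · exact ⟨FDist.uniform A, 0, fun h1 h2 => (h ⟨h1, h2⟩).elim⟩
  choose σ r hσ using hex
  have hev : ∀ᶠ p in 𝓝[>] (0 : ℝ), p ≤ 1 ∧ ∀ q, (∃ n, q ∈ SecN δ dist m T Bd n) → q ≠ T →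
      IsSecureAt δ dist m (SecN δ dist m T Bd (r q)) Bd p (σ q) q := by
    refine (eventually_nhdsGT_le_of_pos one_pos).and (eventually_all.2 fun q => ?_)
    by_cases h : (∃ n, q ∈ SecN δ dist m T Bd n) ∧ q ≠ T
    · exact (hm.eventually_isSecureAt h.2 (hσ q h.1 h.2).2.2).mono fun p hp _ _ => hp
    · exact Eventually.of_forall fun p h1 h2 => (h ⟨h1, h2⟩).elim
  obtain ⟨p, ⟨hp1, hp⟩, hp0⟩ := (hev.and self_mem_nhdsWithin).exists
  refine ⟨σ, p / 2, half_pos hp0, by linarith,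
    fun q h1 h2 => ⟨r q, (hσ q h1 h2).1, (hσ q h1 h2).2.1, ?_⟩⟩
  convert hp q h1 h2 using 1
  ring

lemma IsSecureAt.add_le_outB {G Bd : Set Q} {β : ℝ} {σ : FDist A} {q : Q}
    (hs : IsSecureAt δ dist m G Bd (2 * β) σ q) (hβ : 0 < β) (hβ1 : β ≤ 1) {k : Q → ℕ}
    {r R : ℕ} (hrR : r + 1 ≤ R) (hk : ∀ x, k x ≤ R) (hG : ∀ x ∈ G, k x ≤ r) {w : Q → ℝ}
    {θ ε η : ℝ} (hθ : 0 ≤ θ) (hθε : θ + ε ≤ β) (hwBd : ∀ x ∉ Bd, m x - θ * (1 - β ^ k x) ≤ w x)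
    (hw : ∀ x, m x - θ - ε ≤ w x) (hwq : w q ≤ m q - θ * (1 - β ^ (r + 1)))
    (hηR : η ≤ θ * β ^ R) (hηβ : η ≤ β) (b : B) :
    w q + η ≤ outB (locPay δ dist w q) σ b := by
  set P := next δ dist σ q b
  by_cases hb : b ∈ optActs (locPay δ dist m q) σ
  · obtain ⟨x₀, hx₀G, hx₀⟩ := hs.progress b hb
    have hcost := P.sum_mul_one_sub_pow_le hβ hrR hk hx₀ (hG x₀ hx₀G)
    have hmq : ∑ x, P.1 x * m x = m q :=
      (outB_locPay δ dist m σ q b).symm.trans (hb.trans hs.optimal)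
    have hle := outB_locPay_le_add δ dist (f := fun x => m x - θ * (1 - β ^ k x)) (g := w)
      (c := 0) fun x hx => by linarith [hwBd x fun hxB => hx (hs.avoid b hb x hxB)]
    have hsplit : ∑ x, P.1 x * (m x - θ * (1 - β ^ k x))
        = ∑ x, P.1 x * m x - θ * ∑ x, P.1 x * (1 - β ^ k x) := by
      rw [Finset.mul_sum, ← Finset.sum_sub_distrib]
      exact Finset.sum_congr rfl fun x _ => by ring
    rw [outB_locPay, hsplit, hmq] at hle
    nlinarith
  · have hle := outB_locPay_le_add δ dist (f := m) (g := w) (c := θ + ε) (σ := σ) (q := q)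
      (b := b) fun x _ => by linarith [hw x]
    have : 0 ≤ θ * (1 - β ^ (r + 1)) := mul_nonneg hθ (sub_nonneg.2 (pow_le_one₀ hβ.le hβ1))
    linarith [hs.gap b hb]

end Secure

section Potential

variable {A B Q D : Type} [Fintype A] [Fintype B] [Fintype Q]
variable {δ : Q → A → B → D} {dist : D → FDist Q} {m : Q → ℝ} {T : Q}

variable (δ dist m T) in
/-- Off `Bd`, the cost `1 - β ^ secRank` vanishes outside every `SecN`, where `secRank` is `0`. -/
def secPotential (Bd : Set Q) (u : Q → ℝ) (β θ : ℝ) (q : Q) : ℝ :=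
  if q ∈ Bd then max 0 (u q - θ) else max 0 (m q - θ * (1 - β ^ secRank δ dist m T Bd q))

variable {Bd : Set Q} {u : Q → ℝ} {β θ : ℝ}

lemma secPotential_nonneg : 0 ≤ secPotential δ dist m T Bd u β θ := fun q => by
  unfold secPotential
  split_ifs <;> exact le_max_left _ _

lemma secPotential_le (hm0 : 0 ≤ m) (hu : u ≤ m) (hθ : 0 ≤ θ) (hβ : 0 ≤ β) (hβ1 : β ≤ 1) :
    secPotential δ dist m T Bd u β θ ≤ m := fun q => by
  unfold secPotential
  have := mul_nonneg hθ (sub_nonneg.2 (pow_le_one₀ hβ hβ1 (n := secRank δ dist m T Bd q)))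
  split_ifs
  · exact max_le (hm0 q) (by linarith [hu q])
  · exact max_le (hm0 q) (by linarith)

lemma le_secPotential_of_notMem {q : Q} (hq : q ∉ Bd) :
    m q - θ * (1 - β ^ secRank δ dist m T Bd q) ≤ secPotential δ dist m T Bd u β θ q := by
  simp only [secPotential, hq, if_false]
  exact le_max_right _ _

lemma sub_le_secPotential_of_notMem (hθ : 0 ≤ θ) (hβ : 0 ≤ β) {q : Q} (hq : q ∉ Bd) :
    m q - θ ≤ secPotential δ dist m T Bd u β θ q := by
  have := mul_nonneg hθ (pow_nonneg hβ (secRank δ dist m T Bd q))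
  linarith [le_secPotential_of_notMem (u := u) (β := β) (θ := θ) (δ := δ) (dist := dist)
    (m := m) (T := T) hq]

lemma sub_le_secPotential (hu : u ≤ m) (hθ : 0 ≤ θ) (hβ : 0 ≤ β) (q : Q) :
    u q - θ ≤ secPotential δ dist m T Bd u β θ q := by
  by_cases hq : q ∈ Bd
  · simp only [secPotential, hq, if_true]
    exact le_max_right _ _
  · linarith [sub_le_secPotential_of_notMem (u := u) (δ := δ) (dist := dist) (m := m) (T := T)
      hθ hβ hq, hu q]

variable [Nonempty B]

/-- With the secure strategy on the states of some `SecN` and the approximating one elsewhere,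
`secPotential` increases strictly in expectation wherever it is positive. -/
lemma IsLfpDelta.secPotential_le_valA (hm : IsLfpDelta δ dist T m) {σS σE : Q → FDist A}
    (hβ : 0 < β) (hβ1 : β ≤ 1)
    (hS : ∀ q, (∃ n, q ∈ SecN δ dist m T (Bad δ dist m T) n) → q ≠ T →
      ∃ r, secRank δ dist m T (Bad δ dist m T) q = r + 1 ∧ q ∉ Bad δ dist m T ∧
        IsSecureAt δ dist m (SecN δ dist m T (Bad δ dist m T) r) (Bad δ dist m T) (2 * β) (σS q) q)
    {ε κ : ℝ} (hκ : 0 < κ) (hum : u ≤ m) (hmu : ∀ q, m q - ε ≤ u q)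
    (hσE : ∀ q, q ≠ T → 0 < u q → ∀ b, u q + κ ≤ outB (locPay δ dist u q) (σE q) b)
    (hθ : 0 < θ) (hθε : θ + ε ≤ β) (q : Q) :
    secPotential δ dist m T (Bad δ dist m T) u β θ q ≤
      valA δ dist T (ofPos ((⋃ n, SecN δ dist m T (Bad δ dist m T) n).piecewise σS σE)) q := by
  set Bd := Bad δ dist m T
  set w := secPotential δ dist m T Bd u β θ
  have hwm : w ≤ m := secPotential_le (fun x => (hm.1 x).1) hum hθ.le hβ.le hβ1
  have hwu : ∀ x, u x - θ ≤ w x := sub_le_secPotential hum hθ.le hβ.le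
  obtain ⟨R, hR⟩ : ∃ R, ∀ x, secRank δ dist m T Bd x ≤ R :=
    ⟨Finset.univ.sup (secRank δ dist m T Bd), fun x => Finset.le_sup (Finset.mem_univ x)⟩
  refine le_valA fun sB => le_reach_of_drift (η := min (θ * β ^ R) (min β κ))
    secPotential_nonneg (fun x => (hwm x).trans (hm.1 x).2) (by positivity)
    (fun x hxT hwx b => ?_) sB q
  by_cases hxS : ∃ n, x ∈ SecN δ dist m T Bd n
  · obtain ⟨r, hr, hxB, hs⟩ := hS x hxS hxT
    rw [Set.piecewise_eq_of_mem _ _ _ (Set.mem_iUnion.2 hxS)]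
    have hwx_eq : w x = m x - θ * (1 - β ^ (r + 1)) := by
      simp only [w, secPotential, hxB, if_false, hr] at hwx ⊢
      exact max_eq_right ((lt_max_iff.1 hwx).resolve_left (lt_irrefl 0)).le
    exact hs.add_le_outB hβ hβ1 (hr ▸ hR x) hR (fun y hy => secRank_le hy) hθ.le hθε
      (fun y hy => le_secPotential_of_notMem hy) (fun y => by linarith [hwu y, hmu y])
      hwx_eq.le (min_le_left _ _) ((min_le_right _ _).trans (min_le_left _ _)) b
  rw [Set.piecewise_eq_of_notMem _ _ _ (mt Set.mem_iUnion.1 hxS)]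
  by_cases hxB : x ∈ Bd
  · have hwx_eq : w x = u x - θ := by
      simp only [w, secPotential, hxB, if_true] at hwx ⊢
      exact max_eq_right ((lt_max_iff.1 hwx).resolve_left (lt_irrefl 0)).le
    have hle := outB_locPay_le_add δ dist (f := u) (g := w) (c := θ) (σ := σE x) (q := x)
      (b := b) fun y _ => by linarith [hwu y]
    linarith [hσE x hxT (by linarith) b, min_le_right β κ, min_le_right (θ * β ^ R) (min β κ)]
  · have hm0x : m x = 0 := (mem_Sec_Bad_iff.2 hxB).resolve_left fun h => hxS (Set.mem_iUnion.1 h)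
    linarith [hwm x]

lemma IsLfpDelta.exists_positional_optimal [Nonempty A] (hm : IsLfpDelta δ dist T m) {ε : ℝ}
    (hε : 0 < ε) : ∃ sA : Q → FDist A,
      (∀ q ∈ Sec δ dist m T (Bad δ dist m T), valA δ dist T (ofPos sA) q = m q) ∧
      (∀ q ∈ Bad δ dist m T, m q - ε ≤ valA δ dist T (ofPos sA) q) := by
  obtain ⟨σS, β, hβ, hβ1, hS⟩ := hm.exists_isSecureAt (Bad δ dist m T)
  set ε' := min (ε / 2) (β / 2)
  have hε' : 0 < ε' := by positivity
  obtain ⟨u, κ, σE, hκ, hum, hmu, hσE⟩ := hm.exists_approx_drift hε'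
  have hw (θ : ℝ) (hθ : 0 < θ) (hθε : θ ≤ ε') := hm.secPotential_le_valA hβ hβ1 hS hκ hum hmu
    hσE hθ (by linarith [min_le_right (ε / 2) (β / 2)])
  refine ⟨(⋃ n, SecN δ dist m T (Bad δ dist m T) n).piecewise σS σE, fun q hq => ?_,
    fun q hq => ?_⟩
  · refine le_antisymm (hm.valA_le _ q) (le_of_forall_pos_le_add fun θ hθ => ?_)
    have hθ' : 0 < min θ ε' := lt_min hθ hε'
    have : m q - min θ ε' ≤ secPotential δ dist m T (Bad δ dist m T) u β (min θ ε') q :=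
      sub_le_secPotential_of_notMem hθ'.le hβ.le (mem_Sec_Bad_iff.1 hq)
    linarith [hw _ hθ' (min_le_right _ _) q, min_le_left θ ε']
  · have : u q - ε' ≤ secPotential δ dist m T (Bad δ dist m T) u β ε' q :=
      sub_le_secPotential hum hε'.le hβ.le q
    linarith [hw ε' hε' le_rfl q, hmu q, min_le_left (ε / 2) (β / 2)]

end Potential

end CRG

theorem stmt6_general
    {A B Q D : Type} [Fintype A] [Fintype B] [Fintype Q]
    [Nonempty A] [Nonempty B]
    (δ : Q → A → B → D) (dist : D → FDist Q) (T : Q)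
    (m : Q → ℝ) (hm : CRG.IsLfpDelta δ dist T m) :
    (∀ ε : ℝ, 0 < ε →
      ∃ sA : Q → FDist A,
        (∀ q ∈ CRG.Sec δ dist m T (CRG.Bad δ dist m T),
          CRG.valA δ dist T (CRG.ofPos sA) q = m q) ∧
        (∀ q ∈ CRG.Bad δ dist m T,
          m q - ε ≤ CRG.valA δ dist T (CRG.ofPos sA) q)) ∧
    ∀ q ∈ CRG.Sec δ dist m T (CRG.Bad δ dist m T), CRG.Maximizable δ dist T q := by
  refine ⟨fun ε hε => hm.exists_positional_optimal hε, fun q hq => ?_⟩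
  obtain ⟨sA, hsA, -⟩ := hm.exists_positional_optimal one_pos
  exact hm.maximizable (hsA q hq)

/-- for every ε > 0 there is a positional Player A strategy optimal from
the states of `Sec(Bad)` and ε-optimal from the states of `Bad`; in particular
`Sec(Bad) ⊆ MaxQ_A`. -/
theorem stmt6
    {A B Q D : Type} [Fintype A] [Fintype B] [Fintype Q] [Fintype D]
    [Nonempty A] [Nonempty B] [Nonempty Q] [Nonempty D] [DecidableEq Q]
    (δ : Q → A → B → D) (dist : D → FDist Q) (T : Q)
    (habs : CRG.Absorbing δ dist T)
    (m : Q → ℝ) (hm : CRG.IsLfpDelta δ dist T m) :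
    (∀ ε : ℝ, 0 < ε →
      ∃ sA : Q → FDist A,
        (∀ q ∈ CRG.Sec δ dist m T (CRG.Bad δ dist m T),
          CRG.valA δ dist T (CRG.ofPos sA) q = m q) ∧
        (∀ q ∈ CRG.Bad δ dist m T,
          m q - ε ≤ CRG.valA δ dist T (CRG.ofPos sA) q)) ∧
    ∀ q ∈ CRG.Sec δ dist m T (CRG.Bad δ dist m T), CRG.Maximizable δ dist T q :=
  stmt6_general δ dist T m hm
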